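/- arXiv:1806.04825 — 2 statements merged into one kernel-verified Lean document; each statement's English description precedes it below -/
import Mathlib

section
/- Let E be the sign-deletion graph on tuples of signs and for t ∈ ℤ let V_t be the set of tuples admitting a path to f_t if t ≥ 0, respectively to −f_{−t} if t < 0 (f_t the alternating tuple of length t; f₀ the empty tuple, so V₀ and V_{−0} coincide). If e →^i e' is an edge of E, then for every t: e ∈ V_t if and only if e' ∈ V_t. -/
/-- The alternating sign tuple `f_t = (1, −1, 1, …, (−1)^{t−1})`, with `+1 = true`. -/
def falt (t : ℕ) : List Bool := (List.range t).map fun j => decide (j % 2 = 0)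

/-- Negation of a sign tuple. -/
def negT (l : List Bool) : List Bool := l.map not

/-- `Edge l i l'`: the edge labeled `i` (1-indexed) of the sign-deletion graph; it requires
`1 ≤ i ≤ k−1`, `e_i = e_{i+1}`, and deletes the `i`-th and `(i+1)`-th entries of `l`. -/
def Edge (l : List Bool) (i : ℕ) (l' : List Bool) : Prop :=
  1 ≤ i ∧ i + 1 ≤ l.length ∧ l[i - 1]? = l[i]? ∧ l' = l.take (i - 1) ++ l.drop (i + 1)

/-- `PathP l pat l'`: a path from `l` to `l'` in the sign-deletion graph whose sequence
of edge labels (its pattern) is `pat`. -/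
inductive PathP : List Bool → List ℕ → List Bool → Prop where
  | nil (l : List Bool) : PathP l [] l
  | cons {l l' l'' : List Bool} {i : ℕ} {is : List ℕ} :
      Edge l i l' → PathP l' is l'' → PathP l (i :: is) l''

/-- The terminal vertex `sign(t)·f_{|t|}` attached to `t ∈ ℤ`. -/
def target (t : ℤ) : List Bool := if 0 ≤ t then falt t.toNat else negT (falt (-t).toNat)

/-- `V_t`: the set of sign tuples admitting a path to `sign(t)·f_{|t|}`. -/
def Vmem (t : ℤ) (l : List Bool) : Prop := ∃ pat : List ℕ, PathP l pat (target t)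

/-!
Let `true` act on `ℤ` by the reflection `x ↦ -x` and `false` by `x ↦ 2 - x`. These generate a
faithful action of the infinite dihedral group `ℤ/2 ∗ ℤ/2`, so deleting a pair of equal adjacent
signs does not change the value `w · 0` of a word `w`, nor the parity of its length. Every word
reduces to an alternating one, and alternating words are separated by these two invariants; hence
each word reaches exactly one alternating word, and both ends of an edge reach the same one.
-/

def reflect (b : Bool) (x : ℤ) : ℤ := if b then -x else 2 - x

lemma reflect_involutive (b : Bool) : Function.Involutive (reflect b) := by
  intro x
  cases b <;> simp [reflect]

def wordValue (l : List Bool) : ℤ := l.foldr reflect 0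

lemma wordValue_append_cons_cons (u v : List Bool) (b : Bool) :
    wordValue (u ++ b :: b :: v) = wordValue (u ++ v) := by
  simp only [wordValue, List.foldr_append, List.foldr_cons, reflect_involutive b _]

lemma Edge.exists_eq_append {l l' : List Bool} {i : ℕ} (h : Edge l i l') :
    ∃ u v b, l = u ++ b :: b :: v ∧ l' = u ++ v := by
  obtain ⟨hi, hlen, hget, rfl⟩ := h
  have hget' : l[i - 1] = l[i] := by
    rwa [List.getElem?_eq_getElem (by omega), List.getElem?_eq_getElem (by omega),
      Option.some_inj] at hget
  refine ⟨l.take (i - 1), l.drop (i + 1), l[i - 1], ?_, rfl⟩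
  conv_lhs => rw [← List.take_append_drop (i - 1) l]
  rw [List.drop_eq_getElem_cons (by omega), hget', List.drop_eq_getElem_cons (by omega)]
  simp only [show i - 1 + 1 = i by omega]

lemma edge_append_cons_cons (u v : List Bool) (b : Bool) :
    Edge (u ++ b :: b :: v) (u.length + 1) (u ++ v) := by
  refine ⟨by omega, by simp, by simp, ?_⟩
  rw [Nat.add_assoc, List.drop_length_add_append]
  simp

lemma Edge.wordValue_eq {l l' : List Bool} {i : ℕ} (h : Edge l i l') :
    wordValue l = wordValue l' := by
  obtain ⟨u, v, b, rfl, rfl⟩ := h.exists_eq_append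
  exact wordValue_append_cons_cons u v b

lemma Edge.length_eq {l l' : List Bool} {i : ℕ} (h : Edge l i l') :
    l.length = l'.length + 2 := by
  obtain ⟨u, v, b, rfl, rfl⟩ := h.exists_eq_append
  simp only [List.length_append, List.length_cons]
  omega

lemma PathP.wordValue_eq {l l' : List Bool} {pat : List ℕ} (h : PathP l pat l') :
    wordValue l = wordValue l' := by
  induction h with
  | nil => rfl
  | cons he _ ih => exact he.wordValue_eq.trans ih

lemma PathP.length_mod_two {l l' : List Bool} {pat : List ℕ} (h : PathP l pat l') :
    l.length % 2 = l'.length % 2 := by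
  induction h with
  | nil => rfl
  | cons he _ ih => rw [he.length_eq, ← ih]; omega

lemma exists_pathP_isChain_ne (l : List Bool) :
    ∃ pat r, PathP l pat r ∧ r.IsChain (· ≠ ·) := by
  by_cases hl : l.IsChain (· ≠ ·)
  · exact ⟨[], l, .nil l, hl⟩
  · rw [List.isChain_iff_forall_rel_of_append_cons_cons] at hl
    push Not at hl
    obtain ⟨b, _, u, v, rfl, rfl⟩ := hl
    obtain ⟨pat, r, hp, hr⟩ := exists_pathP_isChain_ne (u ++ v)
    exact ⟨_ :: pat, r, .cons (edge_append_cons_cons u v b) hp, hr⟩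
termination_by l.length

def IsAlternating (l : List Bool) : Prop := ∃ n, l = falt n ∨ l = negT (falt n)

lemma falt_succ (n : ℕ) : falt (n + 1) = true :: negT (falt n) := by
  simp only [falt, negT, List.range_succ_eq_map, List.map_cons, List.map_map]
  congr 1
  refine List.map_congr_left fun j _ => ?_
  rcases Nat.mod_two_eq_zero_or_one j with h | h <;> simp [Nat.succ_mod_two_eq_zero_iff, h]

lemma negT_falt_succ (n : ℕ) : negT (falt (n + 1)) = false :: falt n := by
  simp [falt_succ, negT, List.map_map, Function.comp_def]

lemma isAlternating_cons {b : Bool} {l : List Bool} (hl : IsAlternating l)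
    (hb : ∀ c ∈ l.head?, b ≠ c) : IsAlternating (b :: l) := by
  obtain ⟨n, rfl | rfl⟩ := hl <;> rcases n with _ | n
  · cases b
    exacts [⟨1, Or.inr rfl⟩, ⟨1, Or.inl rfl⟩]
  · obtain rfl : b = false := by simpa [falt_succ] using hb
    exact ⟨n + 2, Or.inr (negT_falt_succ _).symm⟩
  · cases b
    exacts [⟨1, Or.inr rfl⟩, ⟨1, Or.inl rfl⟩]
  · obtain rfl : b = true := by simpa [negT_falt_succ] using hb
    exact ⟨n + 2, Or.inl (falt_succ _).symm⟩

lemma IsAlternating.of_isChain_ne {l : List Bool} (h : l.IsChain (· ≠ ·)) : IsAlternating l := by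
  induction l with
  | nil => exact ⟨0, Or.inl rfl⟩
  | cons b l ih =>
    rw [List.isChain_cons] at h
    exact isAlternating_cons (ih h.2) h.1

lemma isAlternating_target (t : ℤ) : IsAlternating (target t) := by
  unfold target
  split_ifs
  exacts [⟨_, Or.inl rfl⟩, ⟨_, Or.inr rfl⟩]

lemma wordValue_falt (n : ℕ) :
    wordValue (falt n) = -2 * (n / 2 : ℕ) ∧ wordValue (negT (falt n)) = 2 * ((n + 1) / 2 : ℕ) := by
  induction n with
  | zero => simp [wordValue, falt, negT]
  | succ n ih =>
    rw [negT_falt_succ, falt_succ]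
    simp only [wordValue, List.foldr_cons] at ih ⊢
    simp only [reflect, ih, if_true, Bool.false_eq_true, if_false]
    omega

lemma IsAlternating.eq_of_wordValue_eq {x y : List Bool} (hx : IsAlternating x)
    (hy : IsAlternating y) (hval : wordValue x = wordValue y)
    (hlen : x.length % 2 = y.length % 2) : x = y := by
  obtain ⟨n, rfl | rfl⟩ := hx <;> obtain ⟨m, rfl | rfl⟩ := hy <;>
    simp only [falt, negT, List.length_map, List.length_range] at hlen <;>
    simp only [(wordValue_falt _).1, (wordValue_falt _).2] at hval
  · rw [show n = m by omega]
  · rw [show n = 0 by omega, show m = 0 by omega]; rfl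
  · rw [show n = 0 by omega, show m = 0 by omega]; rfl
  · rw [show n = m by omega]

lemma PathP.eq_of_isAlternating {l r s : List Bool} {p q : List ℕ} (hp : PathP l p r)
    (hq : PathP l q s) (hr : IsAlternating r) (hs : IsAlternating s) : r = s :=
  hr.eq_of_wordValue_eq hs (hp.wordValue_eq.symm.trans hq.wordValue_eq)
    (hp.length_mod_two.symm.trans hq.length_mod_two)

/-- if `e → e'` is an edge of the sign-deletion graph then, for every
`t ∈ ℤ`, `e ∈ V_t` if and only if `e' ∈ V_t`. -/
theorem stmt_10 (e e' : List Bool) (i : ℕ) (h : Edge e i e') (t : ℤ) :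
    Vmem t e ↔ Vmem t e' := by
  constructor
  · rintro ⟨p, hp⟩
    obtain ⟨q, r, hq, hr⟩ := exists_pathP_isChain_ne e'
    have hrt : r = target t :=
      (PathP.cons h hq).eq_of_isAlternating hp (.of_isChain_ne hr) (isAlternating_target t)
    exact ⟨q, hrt ▸ hq⟩
  · rintro ⟨p, hp⟩
    exact ⟨i :: p, .cons h hp⟩
end

section
/- Let e = ±f_{t₁,…,t_m} ∈ V₀ be a nonempty sign tuple in the connected component of the empty tuple f₀. Then there exists a path e → f₀ in the sign-deletion graph whose label pattern has the form (i₁,…,i_T, t₁, t₁−1, …, 2, 1) with i_j > t₁ + 1 for all j = 1,…,T. -/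
/-- The alternating tuple of length `t` starting with the sign `s`. -/
def altFrom (s : Bool) : ℕ → List Bool
  | 0 => []
  | t + 1 => s :: altFrom (!s) t

/-- Auxiliary: concatenation of alternating blocks of lengths `ts`, starting with sign `s`,
each block starting with the sign ending the previous one (so adjacent entries agree
exactly at block junctions). -/
def fcatAux (s : Bool) : List ℕ → List Bool
  | [] => []
  | t :: ts => altFrom s t ++ fcatAux (if t % 2 = 1 then s else !s) ts

/-- `f_{t₁,…,t_m}`: the concatenation of alternating blocks of lengths `t₁,…,t_m`. -/
def fcat (ts : List ℕ) : List Bool := fcatAux true ts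

/-- `sgn ε l` is `l` if `ε = +1` and `−l` if `ε = −1`. -/
def sgn (e : Bool) (l : List Bool) : List Bool := if e then l else negT l


/-!
Read a sign tuple as a word in the free product `ℤ/2 ∗ ℤ/2` of the two signs. Deleting two equal
adjacent entries does not change the element of the group, so every vertex of `V₀` represents the
identity. Write `e = A ++ c :: r`, where `A` is the first block and `c` starts the second block, so
that `c` is also the last entry of `A`. Since `A` is reduced, `c :: r` must represent `A⁻¹`, whose
reduced word is `A.reverse = c :: …`. Hence `r` alone reduces to `A.reverse` with its first entry
removed, using only edges that do not touch `A ++ [c]`, i.e. labels above `t₁ + 1`; what remains is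
the palindrome `A ++ A.reverse`, which collapses from the middle by the labels `t₁, …, 1`.
-/

namespace SignTuple

/-- Left multiplication of a reduced word by a sign. -/
def push (a : Bool) : List Bool → List Bool
  | [] => [a]
  | b :: w => if a = b then w else a :: b :: w

def reduce (l : List Bool) : List Bool := l.foldr push []

abbrev IsReduced (l : List Bool) : Prop := l.IsChain (· ≠ ·)

lemma isReduced_push {w : List Bool} (h : IsReduced w) (a : Bool) : IsReduced (push a w) := by
  match w, h with
  | [], _ => simp [SignTuple.push, IsReduced]
  | b :: w, h =>
    by_cases hab : a = b
    · simpa [SignTuple.push, hab] using h.tail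
    · simpa [SignTuple.push, hab, IsReduced, List.isChain_cons_cons] using h

lemma isReduced_foldr_push (u : List Bool) {w : List Bool} (h : IsReduced w) :
    IsReduced (u.foldr push w) := by
  induction u with
  | nil => exact h
  | cons a u ih => exact isReduced_push ih a

lemma isReduced_reduce (l : List Bool) : IsReduced (reduce l) :=
  isReduced_foldr_push l List.isChain_nil

lemma push_push {w : List Bool} (h : IsReduced w) (a : Bool) : push a (push a w) = w := by
  match w, h with
  | [], _ => simp [push]
  | b :: [], _ => by_cases hab : a = b <;> simp [push, hab]
  | b :: c :: w, h =>
    have hbc : b ≠ c := (List.isChain_cons_cons.mp h).1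
    by_cases hab : a = b
    · subst hab; simp [push, hbc]
    · simp [push, hab]

lemma foldr_push_injective (u : List Bool) {w w' : List Bool} (h : IsReduced w)
    (h' : IsReduced w') (heq : u.foldr push w = u.foldr push w') : w = w' := by
  induction u with
  | nil => exact heq
  | cons a u ih =>
    refine ih ?_
    rw [← push_push (isReduced_foldr_push u h) a, ← push_push (isReduced_foldr_push u h') a]
    exact congrArg (push a) heq

lemma reduce_append (u v : List Bool) : reduce (u ++ v) = u.foldr push (reduce v) :=
  List.foldr_append

lemma reduce_append_cons_cons (u : List Bool) (a : Bool) (v : List Bool) :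
    reduce (u ++ a :: a :: v) = reduce (u ++ v) := by
  rw [reduce_append, reduce_append]
  exact congrArg (u.foldr push) (push_push (isReduced_reduce v) a)

lemma IsReduced.reduce_eq {w : List Bool} (h : IsReduced w) : reduce w = w := by
  induction w with
  | nil => rfl
  | cons a w ih =>
    change push a (reduce w) = a :: w
    rw [ih h.tail]
    match w, h with
    | [], _ => rfl
    | b :: w, h => simp [push, (List.isChain_cons_cons.mp h).1]

lemma reduce_append_reverse (u : List Bool) : reduce (u ++ u.reverse) = [] := by
  induction u using List.reverseRecOn with
  | nil => rfl
  | append_singleton u a ih =>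
    rw [List.reverse_append, List.reverse_singleton, List.singleton_append, List.append_assoc,
      List.singleton_append, reduce_append_cons_cons, ih]

lemma reduce_eq_reverse_of_reduce_append_eq_nil {u v : List Bool} (hu : IsReduced u)
    (h : reduce (u ++ v) = []) : reduce v = u.reverse := by
  have hrev : IsReduced u.reverse :=
    List.isChain_reverse.mpr (hu.imp fun _ _ hab => hab.symm)
  refine foldr_push_injective u (isReduced_reduce v) hrev ?_
  rw [← reduce_append, h, ← hrev.reduce_eq, ← reduce_append, reduce_append_reverse]

lemma eq_of_push_eq_cons {a : Bool} {v w : List Bool} (hv : IsReduced v)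
    (h : push a v = a :: w) : v = w := by
  match v, hv with
  | [], _ => simpa [push, eq_comm] using h
  | b :: v, hv =>
    by_cases hab : a = b
    · subst hab
      simp only [push, if_true] at h
      subst h
      exact absurd rfl (List.isChain_cons_cons.mp hv).1
    · simpa [push, hab] using h

end SignTuple

open SignTuple

lemma edge_iff {l l' : List Bool} {i : ℕ} :
    Edge l i l' ↔ ∃ u a v, l = u ++ a :: a :: v ∧ i = u.length + 1 ∧ l' = u ++ v := by
  constructor
  · rintro ⟨hi, hlen, heq, rfl⟩
    have hlt : i - 1 < l.length := by omega
    have hi' : i - 1 + 1 = i := by omega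
    rw [List.getElem?_eq_getElem hlt, List.getElem?_eq_getElem (by omega), Option.some_inj]
      at heq
    refine ⟨l.take (i - 1), l[i - 1], l.drop (i + 1), ?_, by simp; omega, rfl⟩
    conv_lhs => rw [← List.take_append_drop (i - 1) l]
    rw [List.drop_eq_getElem_cons hlt, hi', List.drop_eq_getElem_cons (by omega), heq]
  · rintro ⟨u, a, v, rfl, rfl, rfl⟩
    refine ⟨by omega, by simp, ?_, ?_⟩
    · simp
    · simp [List.drop_append, show u.length + 1 + 1 - u.length = 2 by omega]
      omega

lemma Edge.reduce_eq {l l' : List Bool} {i : ℕ} (h : Edge l i l') : reduce l = reduce l' := by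
  obtain ⟨u, a, v, rfl, -, rfl⟩ := edge_iff.mp h
  exact reduce_append_cons_cons u a v

lemma Edge.append_left (p : List Bool) {l l' : List Bool} {i : ℕ} (h : Edge l i l') :
    Edge (p ++ l) (i + p.length) (p ++ l') := by
  obtain ⟨u, a, v, rfl, rfl, rfl⟩ := edge_iff.mp h
  exact edge_iff.mpr ⟨p ++ u, a, v, by simp, by simp; omega, by simp⟩

namespace PathP

lemma reduce_eq {l l' : List Bool} {pat : List ℕ} (h : PathP l pat l') :
    reduce l = reduce l' := by
  induction h with
  | nil => rfl
  | cons e _ ih => exact e.reduce_eq.trans ih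

lemma append {l m r : List Bool} {p q : List ℕ} (h₁ : PathP l p m) (h₂ : PathP m q r) :
    PathP l (p ++ q) r := by
  induction h₁ with
  | nil => exact h₂
  | cons e _ ih => exact cons e (ih h₂)

lemma append_left (p : List Bool) {l l' : List Bool} {pat : List ℕ} (h : PathP l pat l') :
    PathP (p ++ l) (pat.map (· + p.length)) (p ++ l') := by
  induction h with
  | nil => exact nil _
  | cons e _ ih => exact cons (e.append_left p) ih

lemma one_le {l l' : List Bool} {pat : List ℕ} (h : PathP l pat l') : ∀ i ∈ pat, 1 ≤ i := by
  induction h with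
  | nil => simp
  | cons e _ ih => exact List.forall_mem_cons.mpr ⟨e.1, ih⟩

end PathP

lemma exists_pathP_reduce (l : List Bool) : ∃ pat, PathP l pat (reduce l) := by
  induction l with
  | nil => exact ⟨[], PathP.nil _⟩
  | cons a l ih =>
    obtain ⟨pat, hpat⟩ := ih
    have hshift : PathP (a :: l) (pat.map (· + 1)) (a :: reduce l) := hpat.append_left [a]
    change ∃ pat, PathP (a :: l) pat (push a (reduce l))
    match hred : reduce l with
    | [] => exact ⟨_, hred ▸ hshift⟩
    | b :: w =>
      rw [hred] at hshift
      by_cases hab : a = b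
      · subst hab
        have hdel : Edge (a :: a :: w) 1 w := edge_iff.mpr ⟨[], a, w, rfl, rfl, rfl⟩
        exact ⟨_, by simpa [push] using hshift.append (.cons hdel (.nil _))⟩
      · exact ⟨_, by simpa [push, hab] using hshift⟩

lemma exists_pathP_cons_of_reduce_eq_cons {a : Bool} {r w : List Bool}
    (h : reduce (a :: r) = a :: w) : ∃ pat, (∀ i ∈ pat, 2 ≤ i) ∧ PathP (a :: r) pat (a :: w) := by
  have hw : reduce r = w := eq_of_push_eq_cons (isReduced_reduce r) h
  obtain ⟨pat, hpat⟩ := exists_pathP_reduce r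
  refine ⟨pat.map (· + 1), ?_, hw ▸ hpat.append_left [a]⟩
  simpa using fun i hi => hpat.one_le i hi

lemma pathP_append_reverse (u : List Bool) :
    PathP (u ++ u.reverse) ((List.range u.length).map (u.length - ·)) [] := by
  induction u using List.reverseRecOn with
  | nil => exact PathP.nil _
  | append_singleton u a ih =>
    have hdel : Edge (u ++ a :: a :: u.reverse) (u.length + 1) (u ++ u.reverse) :=
      edge_iff.mpr ⟨u, a, u.reverse, rfl, rfl, rfl⟩
    have hpat : (List.range (u.length + 1)).map (u.length + 1 - ·)
        = (u.length + 1) :: (List.range u.length).map (u.length - ·) := by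
      rw [List.range_succ_eq_map, List.map_cons, List.map_map]
      exact congrArg _ (List.map_congr_left fun _ _ => by simp)
    simpa [hpat] using PathP.cons hdel ih

lemma altFrom_length (s : Bool) (t : ℕ) : (altFrom s t).length = t := by
  induction t generalizing s with
  | zero => rfl
  | succ t ih => simp [altFrom, ih]

lemma isReduced_altFrom (s : Bool) (t : ℕ) : IsReduced (altFrom s t) := by
  induction t generalizing s with
  | zero => exact List.isChain_nil
  | succ t ih =>
    cases t with
    | zero => exact List.isChain_singleton _
    | succ t => exact List.isChain_cons_cons.mpr ⟨by simp, ih !s⟩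

lemma altFrom_succ (s : Bool) (t : ℕ) :
    altFrom s (t + 1) = altFrom s t ++ [if (t + 1) % 2 = 1 then s else !s] := by
  induction t generalizing s with
  | zero => rfl
  | succ t ih =>
    rw [altFrom, ih]
    simp only [altFrom, List.cons_append, List.cons.injEq, true_and]
    congr 2
    split_ifs <;> simp_all <;> omega

lemma negT_altFrom (s : Bool) (t : ℕ) : negT (altFrom s t) = altFrom (!s) t := by
  induction t generalizing s with
  | zero => rfl
  | succ t ih => exact congrArg (_ :: ·) (ih !s)

lemma negT_fcatAux (s : Bool) (ts : List ℕ) : negT (fcatAux s ts) = fcatAux (!s) ts := by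
  induction ts generalizing s with
  | nil => rfl
  | cons t ts ih =>
    rw [fcatAux, fcatAux, negT, List.map_append, ← negT, ← negT, negT_altFrom, ih]
    split_ifs <;> rfl

lemma sgn_fcat (ε : Bool) (ts : List ℕ) : sgn ε (fcat ts) = fcatAux ε ts := by
  cases ε
  · exact negT_fcatAux true ts
  · rfl

lemma fcatAux_cons_cons (s : Bool) (ts : List ℕ) {t₁ t₂ : ℕ} (h₁ : 0 < t₁) (h₂ : 0 < t₂) :
    ∃ w c r, altFrom s t₁ = w ++ [c] ∧ fcatAux s (t₁ :: t₂ :: ts) = w ++ c :: c :: r := by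
  obtain ⟨t₁, rfl⟩ : ∃ k, t₁ = k + 1 := ⟨t₁ - 1, by omega⟩
  obtain ⟨t₂, rfl⟩ : ∃ k, t₂ = k + 1 := ⟨t₂ - 1, by omega⟩
  set c := if (t₁ + 1) % 2 = 1 then s else !s
  refine ⟨altFrom s t₁, c, altFrom (!c) t₂ ++ fcatAux (if (t₂ + 1) % 2 = 1 then c else !c) ts,
    altFrom_succ s t₁, ?_⟩
  rw [fcatAux, fcatAux, altFrom_succ, altFrom, List.append_assoc]
  rfl

/-- if `e = ±f_{t₁,…,t_m}` is a nonempty tuple in `V₀`, there is a path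
`e → f₀` whose pattern is `(i₁,…,i_T, t₁, t₁−1, …, 2, 1)` with every `i_j > t₁ + 1`. -/
theorem stmt_15 (ε : Bool) (t₁ : ℕ) (rest : List ℕ) (h₁ : 0 < t₁)
    (hr : ∀ x ∈ rest, 0 < x) (e : List Bool) (he : e = sgn ε (fcat (t₁ :: rest)))
    (h0 : Vmem 0 e) :
    ∃ pre : List ℕ, (∀ i ∈ pre, t₁ + 1 < i) ∧
      PathP e (pre ++ (List.range t₁).map fun j => t₁ - j) [] := by
  obtain ⟨_, hpath⟩ := h0
  have hnil : reduce e = [] := (PathP.reduce_eq hpath).trans (by simp [target, falt, reduce])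
  rw [he, sgn_fcat] at hnil ⊢
  cases rest with
  | nil =>
    rw [fcatAux, fcatAux, List.append_nil, (isReduced_altFrom ε t₁).reduce_eq] at hnil
    exact absurd (congrArg List.length hnil) (by simp [altFrom_length]; omega)
  | cons t₂ rest =>
    obtain ⟨w, c, r, hblock, htuple⟩ := fcatAux_cons_cons ε rest h₁ (hr t₂ List.mem_cons_self)
    rw [htuple] at hnil ⊢
    have hlen : (w ++ [c]).length = t₁ := hblock ▸ altFrom_length ε t₁
    have hsuffix : reduce (c :: r) = c :: w.reverse := by
      simpa using reduce_eq_reverse_of_reduce_append_eq_nil (u := w ++ [c])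
        (hblock ▸ isReduced_altFrom ε t₁) (by simpa using hnil)
    obtain ⟨pat, hpat, hsuffix_path⟩ := exists_pathP_cons_of_reduce_eq_cons hsuffix
    refine ⟨pat.map (· + t₁), ?_, ?_⟩
    · simpa using fun i hi => by have := hpat i hi; omega
    · have hcollapse := pathP_append_reverse (w ++ [c])
      simp only [List.reverse_append, List.reverse_singleton, List.singleton_append, hlen]
        at hcollapse
      simpa [hlen] using (hsuffix_path.append_left (w ++ [c])).append hcollapse
end
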